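/- Let A be a complex topological algebra and let p be a uniform seminorm on A (a submultiplicative seminorm with p(x²) = p(x)² for all x). Then p(x) ≤ r_A(x) for every x ∈ A, where r_A(x) is the spectral radius of x. -/

import Mathlib

/-!
The square property gives `p (x ^ 2 ^ k) = p x ^ 2 ^ k`. Extend `p` to the unitization by
`‖(c, a)‖ = ‖c‖ + p a` and complete: in the resulting complex Banach algebra, Gelfand's formula
taken along the powers `2 ^ k` shows that the spectral radius of `x` is exactly `p x`. An algebra
homomorphism can only shrink spectra, so this is at most the spectral radius of `x` in the
unitization of `A`.
-/

open scoped ENNReal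
open Filter UniformSpace

-- Mathlib provides this only for commutative `R`.
noncomputable instance {𝕜 R : Type*} [NormedField 𝕜]
    [SeminormedRing R] [NormedAlgebra 𝕜 R] : NormedAlgebra 𝕜 (Completion R) where
  norm_smul_le := norm_smul_le

theorem spectralRadius_eq_nnnorm_of_nnnorm_pow_two_pow {B : Type*} [NormedRing B]
    [NormedAlgebra ℂ B] [CompleteSpace B] {b : B} (h : ∀ k : ℕ, ‖b ^ 2 ^ k‖₊ = ‖b‖₊ ^ 2 ^ k) :
    spectralRadius ℂ b = ‖b‖₊ := by
  refine tendsto_nhds_unique (f := fun _ : ℕ => (‖b‖₊ : ℝ≥0∞)) (l := atTop) ?_ tendsto_const_nhds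
  convert (spectrum.pow_nnnorm_pow_one_div_tendsto_nhds_spectralRadius b).comp
    (tendsto_pow_atTop_atTop_of_one_lt one_lt_two) using 1
  funext k
  rw [Function.comp_apply, h, ENNReal.coe_pow, ← ENNReal.rpow_natCast, ← ENNReal.rpow_mul]
  simp

theorem nnnorm_le_spectralRadius_of_nnnorm_pow_two_pow {R : Type*} [SeminormedRing R]
    [NormedAlgebra ℂ R] {a : R} (h : ∀ k : ℕ, ‖a ^ 2 ^ k‖₊ = ‖a‖₊ ^ 2 ^ k) :
    (‖a‖₊ : ℝ≥0∞) ≤ spectralRadius ℂ a := by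
  let ι : R →ₐ[ℂ] Completion R := AlgHom.mk' Completion.coeRingHom Completion.coe_smul
  have hι : spectralRadius ℂ (ι a) = ‖a‖₊ := by
    have hnorm (b : R) : ‖ι b‖₊ = ‖b‖₊ := Completion.nnnorm_coe b
    rw [spectralRadius_eq_nnnorm_of_nnnorm_pow_two_pow fun k => by rw [← map_pow, hnorm, hnorm, h],
      hnorm]
  exact hι ▸ iSup_le_iSup_of_subset (AlgHom.spectrum_apply_subset ι a)

theorem ofReal_le_spectralRadius_of_ringSeminorm {R : Type*} [Ring R] [Algebra ℂ R]
    (q : RingSeminorm R) (hq : ∀ (c : ℂ) (v : R), q (c • v) = ‖c‖ * q v) {a : R}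
    (ha : ∀ k : ℕ, q (a ^ 2 ^ k) = q a ^ 2 ^ k) :
    ENNReal.ofReal (q a) ≤ spectralRadius ℂ a := by
  let _ := q.toSeminormedRing
  let _ : NormedAlgebra ℂ R := { norm_smul_le c v := (hq c v).le }
  have hnorm : ENNReal.ofReal (q a) = ‖a‖₊ := by
    rw [← ENNReal.ofReal_coe_nnreal, coe_nnnorm]; rfl
  rw [hnorm]
  exact nnnorm_le_spectralRadius_of_nnnorm_pow_two_pow fun k => NNReal.eq (ha k)

namespace Unitization

variable {𝕜 A : Type*} [NormedField 𝕜] [NonUnitalRing A] [Module 𝕜 A] [SMulCommClass 𝕜 A A]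
  [IsScalarTower 𝕜 A A]

def ringSeminorm (p : Seminorm 𝕜 A) (hp : ∀ x y, p (x * y) ≤ p x * p y) :
    RingSeminorm (Unitization 𝕜 A) where
  toFun v := ‖v.fst‖ + p v.snd
  map_zero' := by simp
  add_le' v w := by
    simp only [fst_add, snd_add]
    linarith [norm_add_le v.fst w.fst, map_add_le_add p v.snd w.snd]
  neg' v := by simp
  mul_le' v w := by
    simp only [fst_mul, snd_mul, norm_mul]
    have hsnd : p (v.fst • w.snd + w.fst • v.snd + v.snd * w.snd) ≤
        ‖v.fst‖ * p w.snd + ‖w.fst‖ * p v.snd + p v.snd * p w.snd := by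
      grw [map_add_le_add, map_add_le_add, map_smul_eq_mul, map_smul_eq_mul, hp]
    nlinarith [norm_nonneg v.fst, norm_nonneg w.fst, apply_nonneg p v.snd, apply_nonneg p w.snd]

variable (p : Seminorm 𝕜 A) (hp : ∀ x y, p (x * y) ≤ p x * p y)

theorem ringSeminorm_smul (c : 𝕜) (v : Unitization 𝕜 A) :
    ringSeminorm p hp (c • v) = ‖c‖ * ringSeminorm p hp v := by
  change ‖c • v.fst‖ + p (c • v.snd) = ‖c‖ * (‖v.fst‖ + p v.snd)
  rw [norm_smul, map_smul_eq_mul]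
  ring

theorem ringSeminorm_inr (a : A) : ringSeminorm p hp a = p a := by
  change ‖(0 : 𝕜)‖ + p a = p a
  simp

theorem ringSeminorm_inr_pow_two_pow (hsq : ∀ x, p (x * x) = p x * p x) (k : ℕ) (a : A) :
    ringSeminorm p hp ((a : Unitization 𝕜 A) ^ 2 ^ k) = p a ^ 2 ^ k := by
  induction k generalizing a with
  | zero => simp [ringSeminorm_inr]
  | succ k ih => rw [pow_succ', pow_mul, sq, ← inr_mul, ih, hsq, ← sq, ← pow_mul]

end Unitization

theorem uniform_seminorm_le_spectralRadius_general {A : Type*} [NonUnitalRing A]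
    [Module ℂ A] [SMulCommClass ℂ A A] [IsScalarTower ℂ A A]
    (p : A → ℝ)
    (hadd : ∀ x y, p (x + y) ≤ p x + p y)
    (hsmul : ∀ (c : ℂ) (x : A), p (c • x) = ‖c‖ * p x)
    (hmul : ∀ x y, p (x * y) ≤ p x * p y)
    (hsq : ∀ x, p (x * x) = p x * p x) :
    ∀ x : A, ENNReal.ofReal (p x) ≤ ⨆ lam ∈ quasispectrum ℂ x, (‖lam‖₊ : ℝ≥0∞) := by
  intro x
  obtain ⟨p, rfl⟩ : ∃ p' : Seminorm ℂ A, ⇑p' = p := ⟨Seminorm.of p hadd hsmul, rfl⟩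
  have h := ofReal_le_spectralRadius_of_ringSeminorm (Unitization.ringSeminorm p hmul)
    (Unitization.ringSeminorm_smul p hmul) (a := x) fun k => by
      rw [Unitization.ringSeminorm_inr_pow_two_pow p hmul hsq, Unitization.ringSeminorm_inr]
  rw [Unitization.ringSeminorm_inr] at h
  rwa [Unitization.quasispectrum_eq_spectrum_inr' ℂ ℂ x]

/-- Let `A` be a complex topological algebra and `p` a uniform seminorm on `A`
(a submultiplicative seminorm with the square property). Then `p x ≤ r_A x`,
where `r_A x = sup {‖λ‖ : λ ∈ sp_A x}` is the spectral radius of `x`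
(the spectrum being computed in the unitization). -/
theorem uniform_seminorm_le_spectralRadius {A : Type*} [NonUnitalRing A]
    [Module ℂ A] [SMulCommClass ℂ A A] [IsScalarTower ℂ A A]
    [TopologicalSpace A] [IsTopologicalAddGroup A] [ContinuousSMul ℂ A]
    (hmull : ∀ a : A, Continuous fun x => a * x)
    (hmulr : ∀ a : A, Continuous fun x => x * a)
    (p : A → ℝ)
    (hadd : ∀ x y, p (x + y) ≤ p x + p y)
    (hsmul : ∀ (c : ℂ) (x : A), p (c • x) = ‖c‖ * p x)
    (hmul : ∀ x y, p (x * y) ≤ p x * p y)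
    (hsq : ∀ x, p (x * x) = p x * p x) :
    ∀ x : A, ENNReal.ofReal (p x) ≤ ⨆ lam ∈ quasispectrum ℂ x, (‖lam‖₊ : ℝ≥0∞) :=
  uniform_seminorm_le_spectralRadius_general p hadd hsmul hmul hsq
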